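/- The 3-SAT formula φ has a satisfying assignment if and only if Player 0 has a winning strategy from the vertex v0 in the augmented reachability game 𝔊^φ. -/
import Mathlib


universe u

/-- A two-player game graph: finite-intended vertex set `V`, an ownership function
(`owner v = 0` means `v` is a Player-0 vertex, `owner v = 1` a Player-1 vertex),
and an edge relation such that every vertex has at least one outgoing edge. -/
structure GameGraph (V : Type u) where
  owner : V → Fin 2
  E : V → V → Prop
  exists_succ : ∀ v, ∃ w, E v w

variable {V : Type u}

/-- A play of the game graph: an infinite sequence of vertices following edges. -/
def IsPlay (G : GameGraph V) (ρ : ℕ → V) : Prop :=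
  ∀ k, G.E (ρ k) (ρ (k + 1))

/-- A (history-dependent) strategy: given the list of previously visited
vertices and the current vertex, it chooses a next vertex. -/
abbrev Strategy (V : Type u) := List V → V → V

/-- A strategy of Player `i` is valid if at each Player-`i` vertex it chooses
an edge of the game graph. -/
def StratValid (G : GameGraph V) (i : Fin 2) (σ : Strategy V) : Prop :=
  ∀ (h : List V) (v : V), G.owner v = i → G.E v (σ h v)

/-- A positional (memoryless) strategy ignores the history. -/
def Positional (σ : Strategy V) : Prop :=
  ∀ (h h' : List V) (v : V), σ h v = σ h' v

/-- A play is compliant with the strategy `σ` of Player `i` (a `σ`-play) if at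
every Player-`i` vertex it moves to the vertex chosen by `σ`. -/
def Compliant (G : GameGraph V) (i : Fin 2) (σ : Strategy V) (ρ : ℕ → V) : Prop :=
  ∀ k, G.owner (ρ k) = i → ρ (k + 1) = σ (List.ofFn fun j : Fin k => ρ j.val) (ρ k)

/-- `σ` is a winning strategy for Player `i` from `v`, where `W` is the set of
plays that are winning for Player `i`. -/
def WinsFrom (G : GameGraph V) (i : Fin 2) (W : Set (ℕ → V)) (σ : Strategy V) (v : V) : Prop :=
  StratValid G i σ ∧
    ∀ ρ : ℕ → V, IsPlay G ρ → Compliant G i σ ρ → ρ 0 = v → ρ ∈ W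

/-- The winning region of Player `i`: the vertices from which Player `i` has a
winning strategy. -/
def WinRegion (G : GameGraph V) (i : Fin 2) (W : Set (ℕ → V)) : Set V :=
  {v | ∃ σ, WinsFrom G i W σ v}

/-- A vertex occurs infinitely often along a play. -/
def InfOft (ρ : ℕ → V) (v : V) : Prop := ∀ n, ∃ k, n ≤ k ∧ ρ k = v

/-- An edge is taken infinitely often along a play. -/
def EdgeInfOft (ρ : ℕ → V) (e : V × V) : Prop :=
  ∀ n, ∃ k, n ≤ k ∧ ρ k = e.1 ∧ ρ (k + 1) = e.2

/-- Parity objective: the maximal priority occurring infinitely often is even. -/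
def ParityWin (P : V → ℕ) (ρ : ℕ → V) : Prop :=
  ∃ v, InfOft ρ v ∧ Even (P v) ∧ ∀ w, InfOft ρ w → P w ≤ P v

/-- The set of source vertices of a set of edges. -/
def srcSet (H : Set (V × V)) : Set V := {u | ∃ w, (u, w) ∈ H}

/-- Group transition fairness (live group) assumption: for every live group `H`,
if some source vertex of `H` occurs infinitely often, then some edge of `H` is
taken infinitely often. -/
def psiGlive (Hc : Set (Set (V × V))) (ρ : ℕ → V) : Prop :=
  ∀ H ∈ Hc, (∃ u ∈ srcSet H, InfOft ρ u) → ∃ e ∈ H, EdgeInfOft ρ e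

/-- Vertices of the game `𝔊^φ` built from a 3-SAT formula `φ` with `k` clauses
over `m` variables: the Player-1 vertex `v0`, a Player-0 vertex per clause,
Player-1 vertices `lit x b` (the literal `x_x` if `b = true`, `¬x_x` if
`b = false`) and `litP x b` (the primed copy `y'`), and the Player-0 target
vertex `target` (the vertex `☺`). -/
inductive SatV (m k : ℕ) : Type
  | v0 : SatV m k
  | clause : Fin k → SatV m k
  | lit : Fin m → Bool → SatV m k
  | litP : Fin m → Bool → SatV m k
  | target : SatV m k

/-- Ownership: clause vertices and the target belong to Player 0, all other
vertices to Player 1. -/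
def satOwner {m k : ℕ} : SatV m k → Fin 2
  | SatV.clause _ => 0
  | SatV.target => 0
  | _ => 1

/-- Edges of `𝔊^φ`, where `φ i j` is the `j`-th literal of the `i`-th clause. -/
def satE {m k : ℕ} (φ : Fin k → Fin 3 → Fin m × Bool) : SatV m k → SatV m k → Prop
  | SatV.v0, SatV.clause _ => True
  | SatV.clause i, SatV.lit x b => ∃ j, φ i j = (x, b)
  | SatV.lit _ _, SatV.target => True
  | SatV.lit x b, SatV.litP y c => x = y ∧ b = c
  | SatV.litP _ _, SatV.v0 => True
  | SatV.target, SatV.target => True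
  | _, _ => False

/-- The game graph of `𝔊^φ`. -/
def satGame {m k : ℕ} (φ : Fin k → Fin 3 → Fin m × Bool) (hk : 0 < k) :
    GameGraph (SatV m k) where
  owner := satOwner
  E := satE φ
  exists_succ := by
    intro v
    cases v with
    | v0 => exact ⟨SatV.clause ⟨0, hk⟩, trivial⟩
    | clause i => exact ⟨SatV.lit (φ i 0).1 (φ i 0).2, ⟨0, rfl⟩⟩
    | lit x b => exact ⟨SatV.target, trivial⟩
    | litP x b => exact ⟨SatV.v0, trivial⟩
    | target => exact ⟨SatV.target, trivial⟩

/-- The live group `H_x^1 = {(x_x, ☺), ((¬x_x)', v0)}`. -/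
def liveH1 {m k : ℕ} (x : Fin m) : Set (SatV m k × SatV m k) :=
  {(SatV.lit x true, SatV.target), (SatV.litP x false, SatV.v0)}

/-- The live group `H_x^2 = {(¬x_x, ☺), (x_x', v0)}`. -/
def liveH2 {m k : ℕ} (x : Fin m) : Set (SatV m k × SatV m k) :=
  {(SatV.lit x false, SatV.target), (SatV.litP x true, SatV.v0)}

/-- The set `ℋ = {H_x^1, H_x^2 : x}` of live groups of `𝔊^φ`. -/
def satH (m k : ℕ) : Set (Set (SatV m k × SatV m k)) :=
  {H | ∃ x : Fin m, H = liveH1 x ∨ H = liveH2 x}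

/-- The set of plays winning for Player 0 in the augmented reachability game
`𝔊^φ = (G, ◇{☺}, ψ_glive(ℋ))`. -/
def satWin0 (m k : ℕ) : Set (ℕ → SatV m k) :=
  {ρ | psiGlive (satH m k) ρ → ∃ n, ρ n = SatV.target}


section AuxStmt5

open Classical

variable {m k : ℕ}

/-- One move of Player 1's counter-strategy machine. -/
noncomputable def bmove (σ : Strategy (SatV m k)) (pk : (Fin m → Bool) → Fin k)
    (v : SatV m k) (h : List (SatV m k)) (a : Fin m → Bool) : SatV m k :=
  match v with
  | SatV.v0 => SatV.clause (pk a)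
  | SatV.clause i => σ h (SatV.clause i)
  | SatV.lit x b => SatV.litP x b
  | SatV.litP _ _ => SatV.v0
  | SatV.target => σ h SatV.target

/-- Assignment update of the machine. -/
def bupd (v : SatV m k) (a : Fin m → Bool) : Fin m → Bool :=
  match v with
  | SatV.lit x b => Function.update a x b
  | _ => a

/-- One step of the machine on states (current vertex, history, assignment). -/
noncomputable def bnext (σ : Strategy (SatV m k)) (pk : (Fin m → Bool) → Fin k)
    (s : SatV m k × List (SatV m k) × (Fin m → Bool)) :
    SatV m k × List (SatV m k) × (Fin m → Bool) :=
  ⟨bmove σ pk s.1 s.2.1 s.2.2, s.2.1 ++ [s.1], bupd s.1 s.2.2⟩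

/-- The state after `n` steps. -/
noncomputable def bst (σ : Strategy (SatV m k)) (pk : (Fin m → Bool) → Fin k) (n : ℕ) :
    SatV m k × List (SatV m k) × (Fin m → Bool) :=
  (bnext σ pk)^[n] (SatV.v0, ([] : List (SatV m k)), fun _ => false)

lemma bst_succ (σ : Strategy (SatV m k)) (pk : (Fin m → Bool) → Fin k) (n : ℕ) :
    bst σ pk (n + 1) = bnext σ pk (bst σ pk n) :=
  Function.iterate_succ_apply' _ _ _

end AuxStmt5

/-- The 3-SAT formula `φ` has a satisfying assignment if and only
if Player 0 has a winning strategy from the vertex `v0` in the augmented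
reachability game `𝔊^φ`. -/
theorem stmt5 (m k : ℕ) (hk : 0 < k) (φ : Fin k → Fin 3 → Fin m × Bool) :
    (∃ a : Fin m → Bool, ∀ i : Fin k, ∃ j : Fin 3, a (φ i j).1 = (φ i j).2) ↔
      ∃ σ : Strategy (SatV m k), WinsFrom (satGame φ hk) 0 (satWin0 m k) σ SatV.v0 := by
  constructor
  · rintro ⟨a, ha⟩
    choose J hJ using ha
    refine ⟨fun _ v => match v with
      | SatV.clause i => SatV.lit (φ i (J i)).1 (φ i (J i)).2
      | _ => SatV.target, ?_, ?_⟩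
    · intro h v hv
      cases v with
      | clause i => exact ⟨J i, rfl⟩
      | target => trivial
      | v0 => simp only [satGame, satOwner] at hv; exact absurd hv (by decide)
      | lit x b => simp only [satGame, satOwner] at hv; exact absurd hv (by decide)
      | litP x b => simp only [satGame, satOwner] at hv; exact absurd hv (by decide)
    · intro ρ hplay hcomp h0 hfair
      by_contra hT
      push_neg at hT
      have hplay' : ∀ p, satE φ (ρ p) (ρ (p+1)) := hplay
      -- step lemmas
      have stepv0 : ∀ p, ρ p = SatV.v0 → ∃ i, ρ (p+1) = SatV.clause i := by
        intro p hp
        have hE := hplay' p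
        rw [hp] at hE
        cases hq : ρ (p+1) <;> rw [hq] at hE <;>
          first
          | exact ⟨_, rfl⟩
          | exact absurd hE (by simp [satE])
      have stepclause : ∀ p i, ρ p = SatV.clause i →
          ρ (p+1) = SatV.lit (φ i (J i)).1 (φ i (J i)).2 := by
        intro p i hp
        have hc := hcomp p (by rw [hp]; rfl)
        rw [hp] at hc
        exact hc
      have steplit : ∀ p x b, ρ p = SatV.lit x b → ρ (p+1) = SatV.litP x b := by
        intro p x b hp
        have hE := hplay' p
        rw [hp] at hE
        cases hq : ρ (p+1) <;> rw [hq] at hE <;>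
          first
          | (exact absurd hq (hT _))
          | (obtain ⟨h1, h2⟩ := hE; rw [h1, h2])
          | exact absurd hE (by simp [satE])
      have steplitP : ∀ p x b, ρ p = SatV.litP x b → ρ (p+1) = SatV.v0 := by
        intro p x b hp
        have hE := hplay' p
        rw [hp] at hE
        cases hq : ρ (p+1) <;> rw [hq] at hE <;>
          first
          | rfl
          | exact absurd hE (by simp [satE])
      -- no lit/litP with wrong polarity ever occurs
      have notwrong : ∀ p x b, a x ≠ b →
          ρ p ≠ SatV.lit x b ∧ ρ p ≠ SatV.litP x b := by
        intro p
        induction p with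
        | zero => intro x b _; rw [h0]; exact ⟨by simp, by simp⟩
        | succ p ih =>
          intro x b hab
          constructor
          · intro hp
            have hE := hplay' p
            rw [hp] at hE
            cases hq : ρ p with
            | v0 => rw [hq] at hE; simp [satE] at hE
            | clause i =>
              have h2 := stepclause p i hq
              rw [hp] at h2
              injection h2 with h1 h2
              exact hab (by rw [h1, h2]; exact hJ i)
            | lit y c => rw [hq] at hE; simp [satE] at hE
            | litP y c => rw [hq] at hE; simp [satE] at hE
            | target => rw [hq] at hE; simp [satE] at hE
          · intro hp
            have hE := hplay' p
            rw [hp] at hE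
            cases hq : ρ p with
            | lit y c =>
              rw [hq] at hE
              obtain ⟨h1, h2⟩ := hE
              exact (ih x b hab).1 (by rw [hq, h1, h2])
            | v0 => rw [hq] at hE; simp [satE] at hE
            | clause i => rw [hq] at hE; simp [satE] at hE
            | litP y c => rw [hq] at hE; simp [satE] at hE
            | target => rw [hq] at hE; simp [satE] at hE
      -- the 4-periodic structure
      have phase0 : ∀ n, ρ (4*n) = SatV.v0 := by
        intro n
        induction n with
        | zero => exact h0
        | succ n ih =>
          obtain ⟨i, hi⟩ := stepv0 _ ih
          have h2 := stepclause _ _ hi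
          have h3 := steplit _ _ _ h2
          have h4 := steplitP _ _ _ h3
          have : 4 * (n+1) = 4*n+1+1+1+1 := by ring
          rw [this]
          exact h4
      have round : ∀ n, ∃ x b, ρ (4*n+2) = SatV.lit x b ∧ a x = b := by
        intro n
        obtain ⟨i, hi⟩ := stepv0 _ (phase0 n)
        exact ⟨_, _, stepclause _ _ hi, hJ i⟩
      choose Xf Bf hXB hab using round
      obtain ⟨⟨x, b⟩, hfib⟩ := Finite.exists_infinite_fiber (fun n => (Xf n, Bf n))
      have hfib' : {n | (Xf n, Bf n) = (x, b)}.Infinite := Set.infinite_coe_iff.mp hfib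
      have hxb : ∀ n ∈ {n | (Xf n, Bf n) = (x, b)}, ρ (4*n+2) = SatV.lit x b ∧ a x = b := by
        intro n hn
        simp only [Set.mem_setOf_eq, Prod.mk.injEq] at hn
        refine ⟨?_, ?_⟩
        · rw [← hn.1, ← hn.2]; exact hXB n
        · rw [← hn.1, ← hn.2]; exact hab n
      have hio : InfOft ρ (SatV.lit x b) := by
        intro n
        obtain ⟨q, hq, hqn⟩ := hfib'.exists_gt n
        exact ⟨4*q+2, by omega, (hxb q hq).1⟩
      have haxb : a x = b := by
        obtain ⟨q, hq, _⟩ := hfib'.exists_gt 0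
        exact (hxb q hq).2
      -- instantiate the fairness assumption
      cases b with
      | true =>
        obtain ⟨e, he, hedge⟩ := hfair (liveH1 x) ⟨x, Or.inl rfl⟩
          ⟨SatV.lit x true, ⟨SatV.target, by left; rfl⟩, hio⟩
        rcases he with he | he
        · obtain ⟨q, _, _, hq2⟩ := hedge 0
          rw [he] at hq2
          exact hT _ hq2
        · obtain ⟨q, _, hq1, _⟩ := hedge 0
          rw [he] at hq1
          exact (notwrong q x false (by simp [haxb])).2 hq1
      | false =>
        obtain ⟨e, he, hedge⟩ := hfair (liveH2 x) ⟨x, Or.inr rfl⟩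
          ⟨SatV.lit x false, ⟨SatV.target, by left; rfl⟩, hio⟩
        rcases he with he | he
        · obtain ⟨q, _, _, hq2⟩ := hedge 0
          rw [he] at hq2
          exact hT _ hq2
        · obtain ⟨q, _, hq1, _⟩ := hedge 0
          rw [he] at hq1
          exact (notwrong q x true (by simp [haxb])).2 hq1
  · rintro ⟨σ, hvalid, hwin⟩
    by_contra hsat
    push_neg at hsat
    choose pk hpk using hsat
    set ρ : ℕ → SatV m k := fun n => (bst σ pk n).1 with hρdef
    set hist : ℕ → List (SatV m k) := fun n => (bst σ pk n).2.1 with hhistdef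
    set asg : ℕ → Fin m → Bool := fun n => (bst σ pk n).2.2 with hasgdef
    have hstep : ∀ n, ρ (n+1) = bmove σ pk (ρ n) (hist n) (asg n) :=
      fun n => congrArg Prod.fst (bst_succ σ pk n)
    have hhiststep : ∀ n, hist (n+1) = hist n ++ [ρ n] :=
      fun n => congrArg (fun s => s.2.1) (bst_succ σ pk n)
    have hasgstep : ∀ n, asg (n+1) = bupd (ρ n) (asg n) :=
      fun n => congrArg (fun s => s.2.2) (bst_succ σ pk n)
    -- history invariant
    have hofn : ∀ n, hist n = List.ofFn (fun j : Fin n => ρ j.val) := by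
      intro n
      induction n with
      | zero => rfl
      | succ n ih =>
        rw [List.ofFn_succ']
        simp only [Fin.coe_castSucc, Fin.val_last, List.concat_eq_append]
        rw [hhiststep n, ih]
    -- step lemmas
    have bstepv0 : ∀ p, ρ p = SatV.v0 → ρ (p+1) = SatV.clause (pk (asg p)) := by
      intro p hp; rw [hstep p, hp]; rfl
    have bstepclause : ∀ p i, ρ p = SatV.clause i → ρ (p+1) = σ (hist p) (SatV.clause i) := by
      intro p i hp; rw [hstep p, hp]; rfl
    have bsteplit : ∀ p x b, ρ p = SatV.lit x b → ρ (p+1) = SatV.litP x b := by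
      intro p x b hp; rw [hstep p, hp]; rfl
    have bsteplitP : ∀ p x b, ρ p = SatV.litP x b → ρ (p+1) = SatV.v0 := by
      intro p x b hp; rw [hstep p, hp]; rfl
    have bsteptarget : ∀ p, ρ p = SatV.target → ρ (p+1) = σ (hist p) SatV.target := by
      intro p hp; rw [hstep p, hp]; rfl
    -- assignment step lemmas
    have hasgv0 : ∀ p, ρ p = SatV.v0 → asg (p+1) = asg p := by
      intro p hp; rw [hasgstep p, hp]; rfl
    have hasgclause : ∀ p i, ρ p = SatV.clause i → asg (p+1) = asg p := by
      intro p i hp; rw [hasgstep p, hp]; rfl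
    have hasglit : ∀ p x b, ρ p = SatV.lit x b →
        asg (p+1) = Function.update (asg p) x b := by
      intro p x b hp; rw [hasgstep p, hp]; rfl
    have hasglitP : ∀ p x b, ρ p = SatV.litP x b → asg (p+1) = asg p := by
      intro p x b hp; rw [hasgstep p, hp]; rfl
    -- the answer to a clause is a literal of that clause
    have answerlit : ∀ p i, ρ p = SatV.clause i →
        ∃ x b, ρ (p+1) = SatV.lit x b ∧ ∃ j, φ i j = (x, b) := by
      intro p i hp
      have hE : satE φ (SatV.clause i) (σ (hist p) (SatV.clause i)) :=
        hvalid (hist p) (SatV.clause i) rfl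
      rw [← bstepclause p i hp] at hE
      cases hq : ρ (p+1) with
      | lit x b => exact ⟨x, b, rfl, by rw [hq] at hE; exact hE⟩
      | v0 => rw [hq] at hE; simp [satE] at hE
      | clause i' => rw [hq] at hE; simp [satE] at hE
      | litP x b => rw [hq] at hE; simp [satE] at hE
      | target => rw [hq] at hE; simp [satE] at hE
    -- 4-periodic structure
    have phase0 : ∀ n, ρ (4*n) = SatV.v0 := by
      intro n
      induction n with
      | zero => rfl
      | succ n ih =>
        have h1 := bstepv0 _ ih
        obtain ⟨x, b, h2, _⟩ := answerlit _ _ h1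
        have h3 := bsteplit _ _ _ h2
        have h4 := bsteplitP _ _ _ h3
        have he : 4*(n+1) = 4*n+1+1+1+1 := by ring
        rw [he]; exact h4
    have roundb : ∀ n, ∃ x b, ρ (4*n+2) = SatV.lit x b ∧ ρ (4*n+3) = SatV.litP x b ∧
        asg (4*n) x ≠ b ∧ asg (4*n+4) = Function.update (asg (4*n)) x b := by
      intro n
      have h1 := bstepv0 _ (phase0 n)
      obtain ⟨x, b, h2, j, hj⟩ := answerlit _ _ h1
      have e1 : asg (4*n+1) = asg (4*n) := hasgv0 _ (phase0 n)
      refine ⟨x, b, h2, bsteplit _ _ _ h2, ?_, ?_⟩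
      · intro hcon
        have hh := hpk (asg (4*n)) j
        rw [hj] at hh
        exact hh hcon
      · have e2 : asg (4*n+2) = asg (4*n+1) := hasgclause _ _ h1
        have e3 : asg (4*n+3) = Function.update (asg (4*n+2)) x b := hasglit _ _ _ h2
        have e4 : asg (4*n+4) = asg (4*n+3) := hasglitP _ _ _ (bsteplit _ _ _ h2)
        rw [e4, e3, e2, e1]
    choose X B hlit hlitP hne hupd using roundb
    -- the assignment at the start of each round
    have hA : ∀ n, asg (4*(n+1)) = Function.update (asg (4*n)) (X n) (B n) := by
      intro n
      have he : 4*(n+1) = 4*n+4 := by ring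
      rw [he]; exact hupd n
    have boolne : ∀ a b : Bool, a ≠ b → a = !b := by decide
    have boolnot : ∀ b : Bool, ¬(b = !b) := by decide
    -- alternation between consecutive flips of a variable
    have flip : ∀ t s, s ≤ t → ∀ x b, asg (4*s) x = b → asg (4*t) x = !b →
        ∃ r, s ≤ r ∧ r < t ∧ X r = x ∧ B r = !b := by
      intro t
      induction t with
      | zero =>
        intro s hs x b h1 h2
        have : s = 0 := Nat.le_zero.mp hs
        subst this
        rw [h1] at h2
        exact absurd h2 (boolnot b)
      | succ t ih =>
        intro s hs x b h1 h2
        by_cases hse : s = t + 1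
        · exfalso; subst hse; rw [h1] at h2; exact absurd h2 (boolnot b)
        · have hst : s ≤ t := by omega
          by_cases hxt : asg (4*t) x = !b
          · obtain ⟨r, hr1, hr2, hr3, hr4⟩ := ih s hst x b h1 hxt
            exact ⟨r, hr1, by omega, hr3, hr4⟩
          · have h2' := h2
            rw [hA t, Function.update_apply] at h2'
            split_ifs at h2' with hxX
            · exact ⟨t, hst, by omega, hxX.symm, h2'⟩
            · exact absurd h2' hxt
    have hAne : ∀ n, asg (4*n) (X n) = !(B n) := fun n => boolne _ _ (hne n)
    -- balance: every literal answered infinitely often is answered with both polarities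
    have bal : ∀ x b, (∀ N, ∃ n, N ≤ n ∧ X n = x ∧ B n = b) →
        ∀ N, ∃ n, N ≤ n ∧ X n = x ∧ B n = !b := by
      intro x b hocc N
      obtain ⟨n1, hn1, hx1, hb1⟩ := hocc N
      obtain ⟨n2, hn2, hx2, hb2⟩ := hocc (n1+1)
      have h1 : asg (4*(n1+1)) x = b := by
        rw [hA n1, ← hx1, Function.update_self]
        exact hb1
      have h2 : asg (4*n2) x = !b := by
        have := hAne n2
        rw [hx2, hb2] at this
        exact this
      obtain ⟨r, hr1, hr2, hr3, hr4⟩ := flip n2 (n1+1) hn2 x b h1 h2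
      exact ⟨r, by omega, hr3, hr4⟩
    -- position characterization
    have mod4 : ∀ p : ℕ, ∃ q r, r < 4 ∧ p = 4*q + r := by
      intro p
      exact ⟨p/4, p%4, Nat.mod_lt _ (by norm_num), by omega⟩
    have clause1 : ∀ q, ρ (4*q+1) = SatV.clause (pk (asg (4*q))) :=
      fun q => bstepv0 _ (phase0 q)
    have occlit : ∀ p x b, ρ p = SatV.lit x b → ∃ q, p = 4*q+2 ∧ X q = x ∧ B q = b := by
      intro p x b hp
      obtain ⟨q, r, hr, rfl⟩ := mod4 p
      interval_cases r
      · rw [Nat.add_zero, phase0 q] at hp; simp at hp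
      · rw [clause1 q] at hp; simp at hp
      · rw [hlit q] at hp; injection hp with e1 e2; exact ⟨q, rfl, e1, e2⟩
      · rw [hlitP q] at hp; simp at hp
    have occlitP : ∀ p x b, ρ p = SatV.litP x b → ∃ q, p = 4*q+3 ∧ X q = x ∧ B q = b := by
      intro p x b hp
      obtain ⟨q, r, hr, rfl⟩ := mod4 p
      interval_cases r
      · rw [Nat.add_zero, phase0 q] at hp; simp at hp
      · rw [clause1 q] at hp; simp at hp
      · rw [hlit q] at hp; simp at hp
      · rw [hlitP q] at hp; injection hp with e1 e2; exact ⟨q, rfl, e1, e2⟩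
    have notarget : ∀ p, ρ p ≠ SatV.target := by
      intro p hp
      obtain ⟨q, r, hr, rfl⟩ := mod4 p
      interval_cases r
      · rw [Nat.add_zero, phase0 q] at hp; simp at hp
      · rw [clause1 q] at hp; simp at hp
      · rw [hlit q] at hp; simp at hp
      · rw [hlitP q] at hp; simp at hp
    -- the constructed play is a compliant play from v0
    have hplayρ : IsPlay (satGame φ hk) ρ := by
      intro p
      show satE φ (ρ p) (ρ (p+1))
      cases hq : ρ p with
      | v0 => rw [bstepv0 p hq]; trivial
      | clause i => rw [bstepclause p i hq]; exact hvalid (hist p) (SatV.clause i) rfl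
      | lit x b => rw [bsteplit p x b hq]; exact ⟨rfl, rfl⟩
      | litP x b => rw [bsteplitP p x b hq]; trivial
      | target => rw [bsteptarget p hq]; exact hvalid (hist p) SatV.target rfl
    have hcompρ : Compliant (satGame φ hk) 0 σ ρ := by
      intro p hown
      rw [← hofn p]
      cases hq : ρ p with
      | clause i => exact bstepclause p i hq
      | target => exact bsteptarget p hq
      | v0 => rw [hq] at hown; simp only [satGame, satOwner] at hown; exact absurd hown (by decide)
      | lit x b => rw [hq] at hown; simp only [satGame, satOwner] at hown; exact absurd hown (by decide)
      | litP x b => rw [hq] at hown; simp only [satGame, satOwner] at hown; exact absurd hown (by decide)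
    -- occurrence helpers
    have edgeLitP : ∀ x b, (∀ N, ∃ n, N ≤ n ∧ X n = x ∧ B n = b) →
        EdgeInfOft ρ (SatV.litP x b, SatV.v0) := by
      intro x b hocc N
      obtain ⟨n, hn, hx, hb⟩ := hocc N
      refine ⟨4*n+3, by omega, ?_, ?_⟩
      · show ρ (4*n+3) = SatV.litP x b
        rw [hlitP n, hx, hb]
      · show ρ (4*n+3+1) = SatV.v0
        have e : 4*n+3+1 = 4*(n+1) := by ring
        rw [e]; exact phase0 (n+1)
    have occOfInf : ∀ x b, InfOft ρ (SatV.lit x b) →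
        ∀ N, ∃ n, N ≤ n ∧ X n = x ∧ B n = b := by
      intro x b hio N
      obtain ⟨p, hp, hpe⟩ := hio (4*N+2)
      obtain ⟨q, hq, hx, hb⟩ := occlit p x b hpe
      exact ⟨q, by omega, hx, hb⟩
    have occOfInfP : ∀ x b, InfOft ρ (SatV.litP x b) →
        ∀ N, ∃ n, N ≤ n ∧ X n = x ∧ B n = b := by
      intro x b hio N
      obtain ⟨p, hp, hpe⟩ := hio (4*N+3)
      obtain ⟨q, hq, hx, hb⟩ := occlitP p x b hpe
      exact ⟨q, by omega, hx, hb⟩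
    -- fairness of the constructed play
    have hfairρ : psiGlive (satH m k) ρ := by
      rintro H ⟨x, hx | hx⟩ hsrc <;> subst hx
      · obtain ⟨u, hu, hioU⟩ := hsrc
        simp only [srcSet, liveH1, Set.mem_insert_iff, Set.mem_singleton_iff,
          Prod.mk.injEq, Set.mem_setOf_eq] at hu
        refine ⟨(SatV.litP x false, SatV.v0), by right; rfl, ?_⟩
        apply edgeLitP
        rcases hu with ⟨w, ⟨hu1, _⟩ | ⟨hu1, _⟩⟩
        · subst hu1
          exact bal x true (occOfInf x true hioU)
        · subst hu1
          exact occOfInfP x false hioU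
      · obtain ⟨u, hu, hioU⟩ := hsrc
        simp only [srcSet, liveH2, Set.mem_insert_iff, Set.mem_singleton_iff,
          Prod.mk.injEq, Set.mem_setOf_eq] at hu
        refine ⟨(SatV.litP x true, SatV.v0), by right; rfl, ?_⟩
        apply edgeLitP
        rcases hu with ⟨w, ⟨hu1, _⟩ | ⟨hu1, _⟩⟩
        · subst hu1
          exact bal x false (occOfInf x false hioU)
        · subst hu1
          exact occOfInfP x true hioU
    obtain ⟨n, hnT⟩ := hwin ρ hplayρ hcompρ rfl hfairρ
    exact notarget n hnT
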